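/- arXiv:1403.5099 — 4 statements merged into one kernel-verified Lean document; each statement's English description precedes it below -/
import Mathlib

section
/- A real square matrix A is a P-matrix (all principal minors positive) if and only if every real eigenvalue of A and of every principal submatrix of A is positive. -/
/-!
The coefficient of `t ^ k` in `det (1 + t • B)` is the sum of the `k × k` principal minors
of `B`. So if `B` is a principal submatrix of a P-matrix, `det (1 + t • B) > 0` for all
`t ≥ 0`; an eigenvalue `μ < 0` of `B` would make `1 - μ⁻¹ • B` singular, and `μ = 0` is
excluded by `det B > 0`. Conversely, if some principal submatrix `B` has `det B ≤ 0`, then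
`t ↦ det (t • 1 + B)`, the characteristic polynomial of `-B`, is `≤ 0` at `0` and tends to
`+∞`, so it vanishes at some `t ≥ 0`, and `-t ≤ 0` is an eigenvalue of `B`.
-/

open Matrix BigOperators

/-- The principal minor of `A` indexed by the finset `s`. -/
noncomputable def principalMinor {n : ℕ} (A : Matrix (Fin n) (Fin n) ℝ) (s : Finset (Fin n)) : ℝ :=
  (A.submatrix (fun i : {x // x ∈ s} => (i : Fin n)) (fun j : {x // x ∈ s} => (j : Fin n))).det

/-- `A` is a P-matrix: all principal minors are positive. -/
def IsPMatrix {n : ℕ} (A : Matrix (Fin n) (Fin n) ℝ) : Prop :=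
  ∀ s : Finset (Fin n), s.Nonempty → 0 < principalMinor A s

/-- `A` is a Q-matrix: for each `k` with `1 ≤ k ≤ n`, the sum of all `k × k`
principal minors of `A` is positive. -/
def IsQMatrix {n : ℕ} (A : Matrix (Fin n) (Fin n) ℝ) : Prop :=
  ∀ k : ℕ, 1 ≤ k → k ≤ n →
    0 < ∑ s ∈ Finset.univ.filter (fun s : Finset (Fin n) => s.card = k), principalMinor A s

open Polynomial

namespace Matrix

theorem det_submatrix_map_embedding {m ι R : Type*} [DecidableEq m] [DecidableEq ι] [CommRing R]
    (B : Matrix m m R) (f : ι ↪ m) (s : Finset ι) :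
    (B.submatrix (f ∘ (↑) : s → m) (f ∘ (↑))).det =
      (B.submatrix ((↑) : s.map f → m) (↑)).det := by
  rw [← det_submatrix_equiv_self (s.equivMap f), submatrix_submatrix]
  rfl

variable {m : Type*} [Fintype m] [DecidableEq m]

theorem eval_det_one_add_X_smul {R : Type*} [CommRing R] (B : Matrix m m R) (t : R) :
    (1 + (X : R[X]) • B.map C).det.eval t = (1 + t • B).det := by
  rw [← coe_evalRingHom, RingHom.map_det]
  congr 1
  ext i j
  simp [one_apply, apply_ite (eval t), mul_comm t]

theorem det_one_add_smul_pos_of_principal_minors_nonneg {R : Type*} [CommRing R] [LinearOrder R]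
    [IsStrictOrderedRing R] {B : Matrix m m R}
    (hB : ∀ s : Finset m, 0 ≤ (B.submatrix ((↑) : s → m) (↑)).det)
    {t : R} (ht : 0 ≤ t) : 0 < (1 + t • B).det := by
  set p : R[X] := (1 + (X : R[X]) • B.map C).det
  have hcoeff : ∀ k, 0 ≤ p.coeff k := fun k => by
    rw [coeff_det_one_add_X_smul_eq_sum_minors]
    exact Finset.sum_nonneg fun s _ => hB s
  have hcoeff_zero : p.coeff 0 = 1 := by
    rw [coeff_det_one_add_X_smul_eq_sum_minors, Finset.powersetCard_zero, Finset.sum_singleton]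
    exact det_isEmpty
  rw [← eval_det_one_add_X_smul, eval_eq_sum_range, Finset.sum_range_succ']
  refine add_pos_of_nonneg_of_pos (Finset.sum_nonneg fun k _ => ?_)
    (by rw [pow_zero, mul_one, hcoeff_zero]; exact one_pos)
  exact mul_nonneg (hcoeff _) (pow_nonneg ht _)

theorem nonneg_of_mulVec_eq_smul_of_principal_minors_nonneg {R : Type*} [Field R] [LinearOrder R]
    [IsStrictOrderedRing R] {B : Matrix m m R}
    (hB : ∀ s : Finset m, 0 ≤ (B.submatrix ((↑) : s → m) (↑)).det)
    {μ : R} {v : m → R} (hv : v ≠ 0) (hBv : B *ᵥ v = μ • v) : 0 ≤ μ := by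
  by_contra! hμ
  have hker : (1 + (-μ)⁻¹ • B) *ᵥ v = 0 := by
    rw [add_mulVec, one_mulVec, smul_mulVec, hBv, smul_smul, inv_neg, neg_mul,
      inv_mul_cancel₀ hμ.ne, neg_smul, one_smul, add_neg_cancel]
  have hdet :=
    det_one_add_smul_pos_of_principal_minors_nonneg hB (inv_nonneg.2 (neg_nonneg.2 hμ.le))
  exact hdet.ne' (exists_mulVec_eq_zero_iff.1 ⟨v, hv, hker⟩)

theorem exists_mulVec_eq_smul_nonpos_of_det_nonpos {B : Matrix m m ℝ} (hB : B.det ≤ 0) :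
    ∃ μ : ℝ, μ ≤ 0 ∧ ∃ v ≠ 0, B *ᵥ v = μ • v := by
  have : Nonempty m := by
    by_contra! hm
    rw [det_isEmpty] at hB
    exact one_pos.not_ge hB
  set p := (-B).charpoly
  have hp : ∀ t, p.eval t = (t • 1 + B).det := fun t => by
    rw [eval_charpoly, scalar_apply, ← smul_one_eq_diagonal, sub_neg_eq_add]
  have hdeg : 0 < p.degree := by
    rw [charpoly_degree_eq_dim]
    exact_mod_cast Fintype.card_pos
  have htop := p.tendsto_atTop_of_leadingCoeff_nonneg hdeg
    (by rw [(charpoly_monic _).leadingCoeff]; exact zero_le_one)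
  obtain ⟨t, ht, hroot⟩ : ∃ t ∈ Set.Ici (0 : ℝ), p.eval t = 0 :=
    intermediate_value_Ici p.continuous.continuousOn htop (by simpa [hp] using hB)
  obtain ⟨v, hv, hker⟩ := exists_mulVec_eq_zero_iff.2 ((hp t).symm.trans hroot)
  refine ⟨-t, neg_nonpos.2 ht, v, hv, ?_⟩
  rw [add_mulVec, smul_mulVec, one_mulVec] at hker
  rw [neg_smul, eq_neg_of_add_eq_zero_right hker]

end Matrix

theorem det_submatrix_submatrix_eq_principalMinor {n : ℕ} (A : Matrix (Fin n) (Fin n) ℝ)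
    (s : Finset (Fin n)) (t : Finset s) :
    ((A.submatrix (Subtype.val : s → Fin n) Subtype.val).submatrix (Subtype.val : t → s)
        Subtype.val).det =
      principalMinor A (t.map (Function.Embedding.subtype _)) := by
  rw [submatrix_submatrix]
  exact det_submatrix_map_embedding A (Function.Embedding.subtype _) t

theorem IsPMatrix.principalMinor_nonneg {n : ℕ} {A : Matrix (Fin n) (Fin n) ℝ}
    (hA : IsPMatrix A) (s : Finset (Fin n)) : 0 ≤ principalMinor A s := by
  rcases s.eq_empty_or_nonempty with rfl | hs
  · simp [principalMinor]
  · exact (hA s hs).le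

/-- A real square matrix is a P-matrix iff every real eigenvalue of `A` and of
every principal submatrix of `A` is positive. -/
theorem pMatrix_iff_real_eigenvalues_pos {n : ℕ} (A : Matrix (Fin n) (Fin n) ℝ) :
    IsPMatrix A ↔
      ∀ s : Finset (Fin n), s.Nonempty →
        ∀ μ : ℝ, ∀ v : {x // x ∈ s} → ℝ, v ≠ 0 →
          (A.submatrix (fun i : {x // x ∈ s} => (i : Fin n))
              (fun j : {x // x ∈ s} => (j : Fin n))).mulVec v = μ • v →
          0 < μ := by
  constructor
  · intro hP s hs μ v hv hAv
    have hminors (t : Finset s) :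
        0 ≤ ((A.submatrix (Subtype.val : s → Fin n) Subtype.val).submatrix
          (Subtype.val : t → s) Subtype.val).det := by
      rw [det_submatrix_submatrix_eq_principalMinor]
      exact hP.principalMinor_nonneg _
    refine (nonneg_of_mulVec_eq_smul_of_principal_minors_nonneg hminors hv hAv).lt_of_ne' ?_
    rintro rfl
    rw [zero_smul] at hAv
    exact (hP s hs).ne' (exists_mulVec_eq_zero_iff.1 ⟨v, hv, hAv⟩)
  · intro h s hs
    by_contra! hdet
    obtain ⟨μ, hμ, v, hv, hAv⟩ := exists_mulVec_eq_smul_nonpos_of_det_nonpos hdet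
    exact hμ.not_gt (h s hs μ v hv hAv)
end

section
/- If A is a P-matrix then A is invertible and A⁻¹ is a P-matrix. -/
open Matrix BigOperators

/-!
By Jacobi's complementary minor formula `det A * det (A⁻¹)[s, s] = det A[sᶜ, sᶜ]`, every
principal minor of `A⁻¹` is a principal minor of `A` divided by `det A`, which is itself the
principal minor on `univ`; all of these are positive for a P-matrix.
-/

namespace Matrix

/-- If `M * N = 1` with `M = [[A, B], [C, D]]`, then `M * [[P, 0], [S, 1]] = [[1, B], [0, D]]`. -/
theorem det_fromBlocks_mul_det_of_mul_eq_one {R l m : Type*} [CommRing R] [Fintype l] [Fintype m]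
    [DecidableEq l] [DecidableEq m] {A P : Matrix l l R} {B Q : Matrix l m R} {C S : Matrix m l R}
    {D T : Matrix m m R} (h : fromBlocks A B C D * fromBlocks P Q S T = 1) :
    (fromBlocks A B C D).det * P.det = D.det := by
  rw [fromBlocks_multiply, ← fromBlocks_one, fromBlocks_inj] at h
  obtain ⟨h₁₁, -, h₂₁, -⟩ := h
  have hmul : fromBlocks A B C D * fromBlocks P 0 S 1 = fromBlocks 1 B 0 D := by
    simp [fromBlocks_multiply, h₁₁, h₂₁]
  simpa [det_fromBlocks_zero₁₂, det_fromBlocks_zero₂₁] using congrArg det hmul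

end Matrix

theorem principalMinor_empty {n : ℕ} (A : Matrix (Fin n) (Fin n) ℝ) :
    principalMinor A ∅ = 1 :=
  det_isEmpty

theorem principalMinor_univ {n : ℕ} (A : Matrix (Fin n) (Fin n) ℝ) :
    principalMinor A Finset.univ = A.det :=
  det_submatrix_equiv_self (Equiv.subtypeUnivEquiv Finset.mem_univ) A

theorem principalMinor_compl {n : ℕ} (A : Matrix (Fin n) (Fin n) ℝ) (s : Finset (Fin n)) :
    principalMinor A sᶜ = (A.submatrix ((↑) : {x // x ∉ s} → Fin n) (↑)).det := by
  let e : {x // x ∉ s} ≃ {x // x ∈ sᶜ} := Equiv.subtypeEquivRight fun _ => Finset.mem_compl.symm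
  rw [principalMinor, ← det_submatrix_equiv_self e, submatrix_submatrix]
  rfl

theorem det_mul_principalMinor_inv {n : ℕ} {A : Matrix (Fin n) (Fin n) ℝ} (hA : IsUnit A.det)
    (s : Finset (Fin n)) : A.det * principalMinor A⁻¹ s = principalMinor A sᶜ := by
  let e := Equiv.sumCompl (· ∈ s)
  have hmul : A.submatrix e e * A⁻¹.submatrix e e = 1 := by
    rw [submatrix_mul_equiv, mul_nonsing_inv A hA, submatrix_one_equiv]
  rw [← fromBlocks_toBlocks (A.submatrix e e), ← fromBlocks_toBlocks (A⁻¹.submatrix e e)] at hmul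
  have hjacobi := det_fromBlocks_mul_det_of_mul_eq_one hmul
  rw [fromBlocks_toBlocks, det_submatrix_equiv_self] at hjacobi
  rw [principalMinor_compl]
  exact hjacobi

theorem IsPMatrix.principalMinor_pos {n : ℕ} {A : Matrix (Fin n) (Fin n) ℝ} (hA : IsPMatrix A)
    (s : Finset (Fin n)) : 0 < principalMinor A s := by
  rcases s.eq_empty_or_nonempty with rfl | hs
  · simp [principalMinor_empty]
  · exact hA s hs

/-- A P-matrix is invertible and its inverse is a P-matrix. -/
theorem IsPMatrix.inv {n : ℕ} (A : Matrix (Fin n) (Fin n) ℝ)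
    (hA : IsPMatrix A) : IsUnit A ∧ IsPMatrix A⁻¹ := by
  have hdet : 0 < A.det := principalMinor_univ A ▸ hA.principalMinor_pos Finset.univ
  refine ⟨(isUnit_iff_isUnit_det A).2 hdet.ne'.isUnit, fun s _ => ?_⟩
  have hjacobi := det_mul_principalMinor_inv hdet.ne'.isUnit s
  exact pos_of_mul_pos_right (hjacobi ▸ hA.principalMinor_pos sᶜ) hdet.le
end

section
/- (Fisher–Fuller) If A is a real n×n matrix all of whose leading principal minors are positive, then there exists a diagonal matrix D with positive diagonal entries such that all eigenvalues of DA are real, positive and simple. -/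
/-!
Induct on `n`. Let `A'` be the leading `(n-1) × (n-1)` block of `A` and `D'` a positive diagonal
matrix such that `D'A'` has simple eigenvalues `0 < ν₁ < ⋯ < νₙ₋₁`. For `D_ε = diag(D', ε)` the
last row of `D_0 A` vanishes, so `χ(D_0 A) = X · χ(D'A')` has the simple roots `0 < ν₁ < ⋯`.
Choose points `c₀ < c₁ < ⋯` interlacing these roots. For small `ε > 0`, `χ(D_ε A)` still changes
sign between consecutive `cₖ`, and also between `0` and `c₀`: at `0` its sign is that of
`(-1)ⁿ det(D_ε A) = (-1)ⁿ ε det D' det A`, opposite to the sign at `c₀` inherited from `ε = 0`.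
The intermediate value theorem then gives `n` distinct positive roots.
-/

open Matrix BigOperators Polynomial
open Filter Topology

theorem prod_sub_mul_prod_sub_neg {ι R : Type*} [Fintype ι] [CommRing R] [LinearOrder R]
    [IsStrictOrderedRing R] (r : ι → R) {x y : R} (i₀ : ι) (hx : x < r i₀) (hy : r i₀ < y)
    (h : ∀ i ≠ i₀, 0 < (x - r i) * (y - r i)) :
    (∏ i, (x - r i)) * ∏ i, (y - r i) < 0 := by
  classical
  rw [← Finset.prod_mul_distrib, ← Finset.mul_prod_erase _ _ (Finset.mem_univ i₀)]
  exact mul_neg_of_neg_of_pos (mul_neg_of_neg_of_pos (sub_neg.2 hx) (sub_pos.2 hy))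
    (Finset.prod_pos fun i hi => h i (Finset.ne_of_mem_erase hi))

theorem neg_one_pow_card_mul_prod_sub_pos {ι R : Type*} [Fintype ι] [CommRing R] [LinearOrder R]
    [IsStrictOrderedRing R] (r : ι → R) {x : R} (hx : ∀ i, x < r i) :
    0 < (-1) ^ Fintype.card ι * ∏ i, (x - r i) := by
  rw [← Finset.card_univ, ← Finset.prod_neg]
  exact Finset.prod_pos fun i _ => by simpa using hx i

theorem exists_mem_Ioo_eq_zero_of_mul_neg {α δ : Type*} [ConditionallyCompleteLinearOrder α]
    [TopologicalSpace α] [OrderTopology α] [DenselyOrdered α] [Ring δ] [LinearOrder δ]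
    [IsStrictOrderedRing δ] [TopologicalSpace δ] [OrderClosedTopology δ] {f : α → δ} {a b : α}
    (hab : a ≤ b) (hf : ContinuousOn f (Set.Icc a b)) (h : f a * f b < 0) :
    ∃ x ∈ Set.Ioo a b, f x = 0 := by
  rcases mul_neg_iff.1 h with ⟨ha, hb⟩ | ⟨ha, hb⟩
  · exact intermediate_value_Ioo' hab hf ⟨hb, ha⟩
  · exact intermediate_value_Ioo hab hf ⟨ha, hb⟩

theorem StrictMono.exists_interlacing {α : Type*} [LinearOrder α] [TopologicalSpace α]
    [OrderTopology α] [DenselyOrdered α] [NoMaxOrder α] {m : ℕ} {r : Fin m → α}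
    (hr : StrictMono r) : ∃ c : Fin m → α, ∀ i k, (i ≤ k → r i < c k) ∧ (k < i → c k < r i) := by
  have (k : Fin m) : ∃ c, r k < c ∧ ∀ i, k < i → c < r i := by
    refine ((eventually_all.2 fun i => ?_).and (self_mem_nhdsWithin (a := r k)
      (s := Set.Ioi (r k)))).exists.imp fun c hc => ⟨hc.2, hc.1⟩
    by_cases hki : k < i
    · exact ((eventually_lt_nhds (hr hki)).filter_mono nhdsWithin_le_nhds).mono fun _ hx _ => hx
    · exact .of_forall fun _ hki' => absurd hki' hki
  choose c hc using this
  exact ⟨c, fun i k => ⟨fun hik => (hr.monotone hik).trans_lt (hc k).1, (hc k).2 i⟩⟩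

namespace Polynomial

theorem Monic.eq_prod_X_sub_C_of_isRoot {K ι : Type*} [Field K] [Fintype ι] {p : K[X]}
    (hp : p.Monic) (hdeg : p.natDegree = Fintype.card ι) {μ : ι → K}
    (hμ : Function.Injective μ) (hroot : ∀ i, p.IsRoot (μ i)) :
    p = ∏ i, (X - C (μ i)) := by
  have hdvd : ∏ i, (X - C (μ i)) ∣ p :=
    Finset.prod_dvd_of_coprime (fun i _ j _ hij => pairwise_coprime_X_sub_C hμ hij)
      fun i _ => dvd_iff_isRoot.mpr (hroot i)
  refine eq_of_monic_of_dvd_of_natDegree_le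
    (monic_prod_of_monic _ _ fun i _ => monic_X_sub_C _) hp hdvd ?_
  rw [hdeg, natDegree_prod_of_monic _ _ fun i _ => monic_X_sub_C _]
  simp

theorem exists_strictMono_isRoot_of_eval_mul_eval_neg {m : ℕ} (p : ℝ[X])
    {t : Fin (m + 1) → ℝ} (ht : StrictMono t)
    (h : ∀ i : Fin m, p.eval (t i.castSucc) * p.eval (t i.succ) < 0) :
    ∃ μ : Fin m → ℝ, StrictMono μ ∧ (∀ i, t i.castSucc < μ i) ∧ ∀ i, p.IsRoot (μ i) := by
  have hroot : ∀ i : Fin m, ∃ x ∈ Set.Ioo (t i.castSucc) (t i.succ), p.IsRoot x := fun i =>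
    exists_mem_Ioo_eq_zero_of_mul_neg (ht Fin.castSucc_lt_succ).le
      p.continuous.continuousOn (h i)
  choose μ hμ hroot using hroot
  refine ⟨μ, fun i j hij => ?_, fun i => (hμ i).1, hroot⟩
  calc μ i < t i.succ := (hμ i).2
    _ ≤ t j.castSucc := ht.monotone (Fin.succ_le_castSucc_iff.2 hij)
    _ < μ j := (hμ j).1

theorem exists_sign_changes_X_mul_prod_X_sub_C {m : ℕ} {ν : Fin m → ℝ} (hν : StrictMono ν)
    (hν_pos : ∀ i, 0 < ν i) :
    ∃ c : Fin (m + 1) → ℝ, StrictMono c ∧ (∀ k, 0 < c k) ∧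
      (-1) ^ (m + 1) * (X * ∏ i, (X - C (ν i))).eval (c 0) < 0 ∧
      ∀ k : Fin m, (X * ∏ i, (X - C (ν i))).eval (c k.castSucc) *
        (X * ∏ i, (X - C (ν i))).eval (c k.succ) < 0 := by
  set r : Fin (m + 1) → ℝ := Fin.cons 0 ν
  have hr : StrictMono r := Fin.strictMono_cons.2 ⟨hν_pos, hν⟩
  have heval (x : ℝ) : (X * ∏ i, (X - C (ν i))).eval x = ∏ i, (x - r i) := by
    simp [r, eval_prod, Fin.prod_univ_succ]
  obtain ⟨c, hc⟩ := hr.exists_interlacing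
  have hc_pos (k : Fin (m + 1)) : 0 < c k := (hc 0 k).1 (Fin.zero_le k)
  refine ⟨c, fun k l hkl => ((hc l k).2 hkl).trans ((hc l l).1 le_rfl), hc_pos, ?_, fun k => ?_⟩
  · have := neg_one_pow_card_mul_prod_sub_pos ν fun i => (hc i.succ 0).2 (Fin.succ_pos i)
    rw [Fintype.card_fin] at this
    simp only [eval_mul, eval_X, eval_prod, eval_sub, eval_C]
    calc (-1) ^ (m + 1) * (c 0 * ∏ i, (c 0 - ν i)) = -(c 0 * ((-1) ^ m * ∏ i, (c 0 - ν i))) := by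
          ring
      _ < 0 := neg_neg_of_pos (mul_pos (hc_pos 0) this)
  · simp only [heval]
    refine prod_sub_mul_prod_sub_neg r k.succ ((hc _ _).2 Fin.castSucc_lt_succ)
      ((hc _ _).1 le_rfl) fun i hi => ?_
    rcases hi.lt_or_gt with hi | hi
    · have hi : i ≤ k.castSucc := Fin.le_castSucc_iff.2 hi
      exact mul_pos (sub_pos.2 ((hc _ _).1 hi))
        (sub_pos.2 ((hc _ _).1 (hi.trans Fin.castSucc_lt_succ.le)))
    · exact mul_pos_of_neg_of_neg (sub_neg.2 ((hc _ _).2 (Fin.castSucc_lt_succ.trans hi)))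
        (sub_neg.2 ((hc _ _).2 hi))

theorem exists_pos_strictMono_isRoot_of_perturbation {m : ℕ} (p : ℝ → ℝ[X])
    (hp : ∀ x, Continuous fun ε => (p ε).eval x) {ν : Fin m → ℝ} (hν : StrictMono ν)
    (hν_pos : ∀ i, 0 < ν i) (hp₀ : p 0 = X * ∏ i, (X - C (ν i)))
    (hsign : ∀ ε > 0, 0 < (-1) ^ (m + 1) * (p ε).eval 0) :
    ∃ ε > 0, ∃ μ : Fin (m + 1) → ℝ, StrictMono μ ∧ (∀ i, 0 < μ i) ∧ ∀ i, (p ε).IsRoot (μ i) := by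
  obtain ⟨c, hc_mono, hc_pos, hfirst, hnext⟩ := exists_sign_changes_X_mul_prod_X_sub_C hν hν_pos
  rw [← hp₀] at hfirst hnext
  have hfirst' : ∀ᶠ ε in 𝓝 0, (-1) ^ (m + 1) * (p ε).eval (c 0) < 0 :=
    ((continuous_const.mul (hp _)).tendsto 0).eventually_lt_const hfirst
  have hnext' : ∀ᶠ ε in 𝓝 0, ∀ k : Fin m,
      (p ε).eval (c k.castSucc) * (p ε).eval (c k.succ) < 0 :=
    eventually_all.2 fun k => (((hp _).mul (hp _)).tendsto 0).eventually_lt_const (hnext k)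
  obtain ⟨ε, ⟨hε₁, hε₂⟩, hε⟩ := (((hfirst'.and hnext').filter_mono nhdsWithin_le_nhds).and
    (self_mem_nhdsWithin (a := (0 : ℝ)) (s := Set.Ioi 0))).exists
  set t : Fin (m + 2) → ℝ := Fin.cons 0 c
  have ht : StrictMono t := Fin.strictMono_cons.2 ⟨hc_pos, hc_mono⟩
  obtain ⟨μ, hμ, ht_lt, hroot⟩ := (p ε).exists_strictMono_isRoot_of_eval_mul_eval_neg ht
    fun i => by
      induction i using Fin.cases with
      | zero =>
        have hsq : ((-1 : ℝ) ^ (m + 1)) * (-1) ^ (m + 1) = 1 := by rw [← mul_pow]; simp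
        simp only [t, Fin.castSucc_zero, Fin.cons_zero, Fin.succ_zero_eq_one, Fin.cons_one]
        calc (p ε).eval 0 * (p ε).eval (c 0)
            = ((-1) ^ (m + 1) * (p ε).eval 0) * ((-1) ^ (m + 1) * (p ε).eval (c 0)) := by
              linear_combination (-((p ε).eval 0 * (p ε).eval (c 0))) * hsq
          _ < 0 := mul_neg_of_pos_of_neg (hsign ε hε) hε₁
      | succ k => simpa [t, ← Fin.succ_castSucc] using hε₂ k
  exact ⟨ε, hε, μ, hμ, fun i => (ht.monotone (Fin.zero_le _)).trans_lt (ht_lt i), hroot⟩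

end Polynomial

namespace Matrix

theorem charpoly_eq_X_mul_of_row_eq_zero {R : Type*} [CommRing R] {n : ℕ}
    (M : Matrix (Fin (n + 1)) (Fin (n + 1)) R) (i : Fin (n + 1)) (h : M i = 0) :
    M.charpoly = X * (M.submatrix i.succAbove i.succAbove).charpoly := by
  rw [charpoly, det_succ_row _ i, Finset.sum_eq_single i]
  · have : (charmatrix M).submatrix i.succAbove i.succAbove
        = charmatrix (M.submatrix i.succAbove i.succAbove) := by
      ext j k
      simp [charmatrix_apply, diagonal_apply]
    simp [← two_mul, this, h, charpoly]
  · intro j _ hj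
    simp [h, Ne.symm hj]
  · simp

theorem continuous_eval_charpoly {n R : Type*} [Fintype n] [DecidableEq n] [CommRing R]
    [TopologicalSpace R] [IsTopologicalRing R] (x : R) :
    Continuous fun M : Matrix n n R => M.charpoly.eval x := by
  simp only [eval_charpoly]
  fun_prop

theorem neg_one_pow_card_mul_eval_zero_charpoly {n R : Type*} [Fintype n] [DecidableEq n]
    [CommRing R] (M : Matrix n n R) :
    (-1) ^ Fintype.card n * M.charpoly.eval 0 = M.det := by
  rw [det_eq_sign_charpoly_coeff, coeff_zero_eq_eval_zero]

theorem exists_pos_snoc_charpoly_eq_prod {n : ℕ} (A : Matrix (Fin (n + 1)) (Fin (n + 1)) ℝ)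
    (hA : 0 < A.det) {d : Fin n → ℝ} (hd : ∀ i, 0 < d i) {ν : Fin n → ℝ} (hν : StrictMono ν)
    (hν_pos : ∀ i, 0 < ν i)
    (hν_charpoly : (diagonal d * A.submatrix Fin.castSucc Fin.castSucc).charpoly
      = ∏ i, (X - C (ν i))) :
    ∃ ε > 0, ∃ μ : Fin (n + 1) → ℝ, StrictMono μ ∧ (∀ i, 0 < μ i) ∧
      (diagonal (Fin.snoc d ε) * A).charpoly = ∏ i, (X - C (μ i)) := by
  have hcont (x : ℝ) : Continuous fun ε => (diagonal (Fin.snoc d ε) * A).charpoly.eval x :=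
    (continuous_eval_charpoly x).comp
      (((continuous_const.finSnoc continuous_id).matrix_diagonal).matrix_mul continuous_const)
  have hzero : (diagonal (Fin.snoc d 0) * A).charpoly = X * ∏ i, (X - C (ν i)) := by
    rw [charpoly_eq_X_mul_of_row_eq_zero _ (Fin.last n) (by ext; simp [diagonal_mul]),
      Fin.succAbove_last, ← hν_charpoly]
    congr 2
    ext i j
    simp [diagonal_mul]
  have hsign (ε : ℝ) (hε : 0 < ε) :
      0 < (-1) ^ (n + 1) * (diagonal (Fin.snoc d ε) * A).charpoly.eval 0 := by
    have hdet := neg_one_pow_card_mul_eval_zero_charpoly (diagonal (Fin.snoc d ε) * A)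
    rw [Fintype.card_fin] at hdet
    rw [hdet, det_mul, det_diagonal, Fin.prod_snoc]
    exact mul_pos (mul_pos (Finset.prod_pos fun i _ => hd i) hε) hA
  obtain ⟨ε, hε, μ, hμ, hμ_pos, hroot⟩ :=
    exists_pos_strictMono_isRoot_of_perturbation _ hcont hν hν_pos hzero hsign
  refine ⟨ε, hε, μ, hμ, hμ_pos, (charpoly_monic _).eq_prod_X_sub_C_of_isRoot ?_ hμ.injective hroot⟩
  rw [charpoly_natDegree_eq_dim]

theorem exists_pos_diagonal_charpoly_eq_prod_of_leadingMinors_pos {n : ℕ}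
    (A : Matrix (Fin n) (Fin n) ℝ)
    (hA : ∀ k : ℕ, (hk : k ≤ n) → 1 ≤ k →
      0 < (A.submatrix (Fin.castLE hk) (Fin.castLE hk)).det) :
    ∃ d : Fin n → ℝ, (∀ i, 0 < d i) ∧ ∃ μ : Fin n → ℝ, StrictMono μ ∧ (∀ i, 0 < μ i) ∧
      (diagonal d * A).charpoly = ∏ i, (X - C (μ i)) := by
  induction n with
  | zero => exact ⟨finZeroElim, finZeroElim, finZeroElim, finZeroElim, finZeroElim, by simp⟩
  | succ n ih =>
    obtain ⟨d, hd, ν, hν, hν_pos, hν_charpoly⟩ :=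
      ih (A.submatrix Fin.castSucc Fin.castSucc) fun k hk => hA k (hk.trans n.le_succ)
    have hdet : 0 < A.det := by simpa using hA (n + 1) le_rfl le_add_self
    obtain ⟨ε, hε, μ, hμ, hμ_pos, hμ_charpoly⟩ :=
      exists_pos_snoc_charpoly_eq_prod A hdet hd hν hν_pos hν_charpoly
    refine ⟨Fin.snoc d ε, fun i => ?_, μ, hμ, hμ_pos, hμ_charpoly⟩
    induction i using Fin.lastCases <;> simp [hd, hε]

end Matrix

/-- (Fisher–Fuller) If all leading principal minors of a real `n × n` matrix `A`
are positive, then there is a positive diagonal matrix `D` such that all the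
eigenvalues of `D * A` are real, positive and simple (the characteristic
polynomial of `D * A` has `n` distinct positive real roots). -/
theorem fisher_fuller {n : ℕ} (A : Matrix (Fin n) (Fin n) ℝ)
    (hA : ∀ k : ℕ, (hk : k ≤ n) → 1 ≤ k →
      0 < (A.submatrix (Fin.castLE hk) (Fin.castLE hk)).det) :
    ∃ d : Fin n → ℝ, (∀ i, 0 < d i) ∧
      ∃ μ : Fin n → ℝ, Function.Injective μ ∧ (∀ i, 0 < μ i) ∧
        (Matrix.diagonal d * A).charpoly = ∏ i, (X - C (μ i)) := by
  obtain ⟨d, hd, μ, hμ, hμ_pos, hcharpoly⟩ :=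
    Matrix.exists_pos_diagonal_charpoly_eq_prod_of_leadingMinors_pos A hA
  exact ⟨d, hd, μ, hμ.injective, hμ_pos, hcharpoly⟩
end

section
/- (Sylvester's determinant identity, special case) Let A be an n×n matrix with invertible leading principal k×k block A_{kk}. Define the (n−k)×(n−k) matrix B by b_{lr} = det A[(1,…,k,l),(1,…,k,r)] for l, r > k, where A[(i's),(j's)] denotes the submatrix with the indicated rows and columns. Then for any p-element index sets (l₁<…<l_p) and (r₁<…<r_p) from {k+1,…,n}: det B[(l's),(r's)] = (det A_{kk})^{p−1} · det A[(1,…,k,l₁,…,l_p),(1,…,k,r₁,…,r_p)]. -/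
open Matrix BigOperators

variable {F : Type*} [Field F]

/-- The minor of an `n × n` matrix `A` with rows `1, …, k, l₁, …, lₚ` and
columns `1, …, k, r₁, …, rₚ` (indices beyond `k` given by `l, r`). -/
noncomputable def borderedMinor {n k p : ℕ} (hk : k ≤ n)
    (A : Matrix (Fin n) (Fin n) F) (l r : Fin p → Fin n) : F :=
  (A.submatrix (Sum.elim (Fin.castLE hk) l) (Sum.elim (Fin.castLE hk) r) :
    Matrix (Fin k ⊕ Fin p) (Fin k ⊕ Fin p) F).det

/-!
Let `S = A - A[:, K] A_{kk}⁻¹ A[K, :]` (with `K = {1, …, k}`) be the Schur complement of the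
leading block, extended to an `n × n` matrix. By the Schur determinant formula every bordered
minor factors as `det A[K ∪ L, K ∪ R] = det A_{kk} · det S[L, R]`. For `p = 1` this says
`B = det A_{kk} • S` on the indices `> k`, so
`det B[L, R] = (det A_{kk})^p · det S[L, R] = (det A_{kk})^(p-1) · det A[K ∪ L, K ∪ R]`.
-/

theorem Matrix.submatrix_sum_elim {α m n m₁ m₂ n₁ n₂ : Type*} (A : Matrix m n α)
    (f₁ : m₁ → m) (f₂ : m₂ → m) (g₁ : n₁ → n) (g₂ : n₂ → n) :
    A.submatrix (Sum.elim f₁ f₂) (Sum.elim g₁ g₂) =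
      fromBlocks (A.submatrix f₁ g₁) (A.submatrix f₁ g₂) (A.submatrix f₂ g₁)
        (A.submatrix f₂ g₂) := by
  ext (i | i) (j | j) <;> rfl

noncomputable def leadingSchurComplement {n k : ℕ} (hk : k ≤ n)
    (A : Matrix (Fin n) (Fin n) F) : Matrix (Fin n) (Fin n) F :=
  A - A.submatrix id (Fin.castLE hk) * (A.submatrix (Fin.castLE hk) (Fin.castLE hk))⁻¹ *
    A.submatrix (Fin.castLE hk) id

theorem leadingSchurComplement_submatrix {n k p q : ℕ} (hk : k ≤ n)
    (A : Matrix (Fin n) (Fin n) F) (l : Fin p → Fin n) (r : Fin q → Fin n) :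
    (leadingSchurComplement hk A).submatrix l r =
      A.submatrix l r - A.submatrix l (Fin.castLE hk) *
        (A.submatrix (Fin.castLE hk) (Fin.castLE hk))⁻¹ * A.submatrix (Fin.castLE hk) r := by
  rw [leadingSchurComplement, submatrix_sub, Pi.sub_apply, Pi.sub_apply,
    submatrix_mul _ _ _ id _ Function.bijective_id, submatrix_mul _ _ _ id _ Function.bijective_id]
  rfl

theorem borderedMinor_eq_det_mul_det_leadingSchurComplement {n k p : ℕ} (hk : k ≤ n)
    (A : Matrix (Fin n) (Fin n) F)
    (hAkk : (A.submatrix (Fin.castLE hk) (Fin.castLE hk)).det ≠ 0) (l r : Fin p → Fin n) :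
    borderedMinor hk A l r =
      (A.submatrix (Fin.castLE hk) (Fin.castLE hk)).det *
        ((leadingSchurComplement hk A).submatrix l r).det := by
  let _ : Invertible (A.submatrix (Fin.castLE hk) (Fin.castLE hk)) :=
    invertibleOfIsUnitDet _ (isUnit_iff_ne_zero.mpr hAkk)
  rw [borderedMinor, submatrix_sum_elim, det_fromBlocks₁₁, invOf_eq_nonsing_inv,
    leadingSchurComplement_submatrix]

theorem borderedMinor_fin_one {n k : ℕ} (hk : k ≤ n) (A : Matrix (Fin n) (Fin n) F)
    (hAkk : (A.submatrix (Fin.castLE hk) (Fin.castLE hk)).det ≠ 0) (i j : Fin n) :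
    borderedMinor hk A (fun _ : Fin 1 => i) (fun _ => j) =
      (A.submatrix (Fin.castLE hk) (Fin.castLE hk)).det * leadingSchurComplement hk A i j := by
  rw [borderedMinor_eq_det_mul_det_leadingSchurComplement hk A hAkk, det_fin_one,
    submatrix_apply]

theorem sylvester_determinant_identity_general {n k : ℕ} (hk : k ≤ n)
    (A : Matrix (Fin n) (Fin n) F)
    (hAkk : (A.submatrix (Fin.castLE hk) (Fin.castLE hk)).det ≠ 0)
    (B : Matrix {i : Fin n // k ≤ (i : ℕ)} {i : Fin n // k ≤ (i : ℕ)} F)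
    (hB : ∀ l r : {i : Fin n // k ≤ (i : ℕ)},
      B l r = borderedMinor hk A (fun _ : Fin 1 => (l : Fin n)) (fun _ => (r : Fin n)))
    (p : ℕ) (hp : 0 < p)
    (l r : Fin p → {i : Fin n // k ≤ (i : ℕ)}) :
    (B.submatrix l r).det =
      (A.submatrix (Fin.castLE hk) (Fin.castLE hk)).det ^ (p - 1) *
        borderedMinor hk A (fun i => (l i : Fin n)) (fun i => (r i : Fin n)) := by
  set d := (A.submatrix (Fin.castLE hk) (Fin.castLE hk)).det
  have hB_smul : B.submatrix l r =
      d • (leadingSchurComplement hk A).submatrix (fun i => (l i : Fin n))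
        (fun i => (r i : Fin n)) := by
    ext i j
    rw [submatrix_apply, hB, borderedMinor_fin_one hk A hAkk]
    rfl
  rw [hB_smul, det_smul, borderedMinor_eq_det_mul_det_leadingSchurComplement hk A hAkk,
    Fintype.card_fin, ← mul_assoc, ← pow_succ, Nat.sub_add_cancel hp]

/-- (Sylvester's determinant identity) Let `A` be an `n × n` matrix whose
leading principal `k × k` block has nonzero determinant, and let `B` be the
matrix of bordered minors `b_{l r} = det A[(1,…,k,l),(1,…,k,r)]` for `l, r > k`.
Then every `p × p` minor of `B` with row indices `l₁ < … < lₚ` and column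
indices `r₁ < … < rₚ` (all `> k`) equals
`(det A_{kk})^(p-1) · det A[(1,…,k,l₁,…,lₚ),(1,…,k,r₁,…,rₚ)]`. -/
theorem sylvester_determinant_identity {n k : ℕ} (hk : k ≤ n)
    (A : Matrix (Fin n) (Fin n) F)
    (hAkk : (A.submatrix (Fin.castLE hk) (Fin.castLE hk)).det ≠ 0)
    (B : Matrix {i : Fin n // k ≤ (i : ℕ)} {i : Fin n // k ≤ (i : ℕ)} F)
    (hB : ∀ l r : {i : Fin n // k ≤ (i : ℕ)},
      B l r = borderedMinor hk A (fun _ : Fin 1 => (l : Fin n)) (fun _ => (r : Fin n)))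
    (p : ℕ) (hp : 0 < p)
    (l r : Fin p → {i : Fin n // k ≤ (i : ℕ)})
    (hl : StrictMono l) (hr : StrictMono r) :
    (B.submatrix l r).det =
      (A.submatrix (Fin.castLE hk) (Fin.castLE hk)).det ^ (p - 1) *
        borderedMinor hk A (fun i => (l i : Fin n)) (fun i => (r i : Fin n)) :=
  sylvester_determinant_identity_general hk A hAkk B hB p hp l r
end
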